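/- For n even, the multiset of f-values of odd words of rank n+1 equals the multiset of f-values of odd words of rank n; in particular their residue distributions modulo any integer coincide. -/

import Mathlib

/-- The list of words covered by `w` in the Young-Fibonacci lattice. -/
def preds : List ℕ → List (List ℕ)
  | [] => []
  | 1 :: t => [t]
  | 2 :: t => (1 :: t) :: (preds t).map (fun u => 2 :: u)
  | _ :: _ => []

theorem preds_sum_lt : ∀ (w u : List ℕ), u ∈ preds w → u.sum < w.sum := by
  intro w
  induction w using preds.induct with
  | case1 => intro u h; simp [preds] at h
  | case2 t => intro u h; simp [preds] at h; subst h; simp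
  | case3 t ih =>
      intro u h
      simp [preds] at h
      rcases h with h | ⟨v, hv, rfl⟩
      · subst h; simp
      · have := ih v hv; simpa using by omega
  | case4 x t h1 h2 => intro u h; simp [preds] at h

/-- The number of saturated chains from the empty word to `w`. -/
def f (w : List ℕ) : ℕ :=
  if w = [] then 1
  else ((preds w).attach.map (fun u => f u.1)).sum
termination_by w.sum
decreasing_by exact preds_sum_lt w u.1 u.2

/-- The product formula. -/
def fprod (w : List ℕ) : ℕ :=
  ∏ i ∈ Finset.univ.filter (fun i : Fin w.length => w.get i = 2), ((w.drop i.1).sum - 1)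

/-! A leading `2` of an odd word of odd rank `n + 1` would contribute the even factor `n`
to `fprod`, so every such word is `1 :: t` with `t` an odd word of rank `n`;
and a leading `1` contributes no factor. -/

def IsOddWord (n : ℕ) (w : List ℕ) : Prop :=
  (∀ x ∈ w, x = 1 ∨ x = 2) ∧ w.sum = n ∧ Odd (fprod w)

lemma fprod_eq_prod_ite (w : List ℕ) :
    fprod w = ∏ i : Fin w.length, if w.get i = 2 then (w.drop i.1).sum - 1 else 1 := by
  rw [fprod, Finset.prod_filter]

lemma fprod_cons_one (t : List ℕ) : fprod (1 :: t) = fprod t := by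
  rw [fprod_eq_prod_ite, fprod_eq_prod_ite]
  simp only [List.length_cons]
  rw [Fin.prod_univ_succ]
  simp

lemma fprod_cons_two (t : List ℕ) : fprod (2 :: t) = (t.sum + 1) * fprod t := by
  rw [fprod_eq_prod_ite, fprod_eq_prod_ite]
  simp only [List.length_cons]
  rw [Fin.prod_univ_succ]
  simp [Nat.add_comm]

lemma even_fprod_cons_two {t : List ℕ} (h : Even (t.sum + 1)) : Even (fprod (2 :: t)) := by
  rw [fprod_cons_two]
  exact h.mul_right _

lemma isOddWord_cons_one_iff {n : ℕ} {t : List ℕ} :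
    IsOddWord (n + 1) (1 :: t) ↔ IsOddWord n t := by
  simp only [IsOddWord, List.forall_mem_cons, List.sum_cons, fprod_cons_one, true_or,
    true_and]
  rw [Nat.add_comm 1, Nat.add_right_cancel_iff]

lemma not_isOddWord_cons_two {n : ℕ} (hn : Even n) (t : List ℕ) :
    ¬ IsOddWord (n + 1) (2 :: t) := by
  rintro ⟨-, hsum, hodd⟩
  have hrank : t.sum + 1 = n := by simp only [List.sum_cons] at hsum; omega
  exact Nat.not_even_iff_odd.mpr hodd (even_fprod_cons_two (hrank ▸ hn))

lemma isOddWord_succ_iff {n : ℕ} (hn : Even n) {w : List ℕ} :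
    IsOddWord (n + 1) w ↔ ∃ t, IsOddWord n t ∧ 1 :: t = w := by
  constructor
  · intro hw
    match w, hw with
    | [], hw => simp [IsOddWord] at hw
    | a :: t, hw =>
      rcases hw.1 a List.mem_cons_self with rfl | rfl
      · exact ⟨t, isOddWord_cons_one_iff.mp hw, rfl⟩
      · exact absurd hw (not_isOddWord_cons_two hn t)
  · rintro ⟨t, ht, rfl⟩
    exact isOddWord_cons_one_iff.mpr ht

/-- for `n` even, the multiset of `f`-values of odd words of rank `n+1`
equals that of rank `n`; in particular their residue distributions modulo any
integer coincide. -/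
theorem fvalues_step_even (n : ℕ) (hn : Even n) (L L' : Finset (List ℕ))
    (hL : ∀ w : List ℕ, w ∈ L ↔ (∀ x ∈ w, x = 1 ∨ x = 2) ∧ w.sum = n ∧ Odd (fprod w))
    (hL' : ∀ w : List ℕ, w ∈ L' ↔ (∀ x ∈ w, x = 1 ∨ x = 2) ∧ w.sum = n + 1 ∧ Odd (fprod w)) :
    L'.val.map fprod = L.val.map fprod ∧
    (∀ d : ℕ, L'.val.map (fun w => fprod w % d) = L.val.map (fun w => fprod w % d)) := by
  have hL'_eq : L' = L.map ⟨List.cons 1, List.cons_injective⟩ := by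
    ext w
    simp only [Finset.mem_map, Function.Embedding.coeFn_mk]
    exact (hL' w).trans ((isOddWord_succ_iff hn).trans (by simp only [hL, IsOddWord]))
  have hvalues : L'.val.map fprod = L.val.map fprod := by
    rw [hL'_eq, Finset.map_val, Multiset.map_map]
    exact congrArg (Multiset.map · L.val) (funext fprod_cons_one)
  refine ⟨hvalues, fun d => ?_⟩
  simpa only [Multiset.map_map, Function.comp_def] using congrArg (Multiset.map (· % d)) hvalues
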